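/- arXiv:1506.04241 — 2 statements merged into one kernel-verified Lean document; each statement's English description precedes it below -/
import Mathlib

section
/- Fix h ∈ ℝ, J > 0, and set M := max_{x ∈ ℝ} p̃(x). Let 𝒞 be any closed (possibly unbounded) subset of ℝ containing no global maximum point of p̃. Then there exists ε > 0 such that e^{−N·M}·∫_𝒞 e^{N·F_N(x)} dx = O(e^{−N·ε}) as N → ∞, i.e. the sequence e^{N(ε−M)}·∫_𝒞 e^{N·F_N(x)} dx is bounded in N. -/
open MeasureTheory Filter Real

noncomputable section

/-- A dimer configuration on the complete graph `K_N`: a set of non-loop edges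
that are pairwise non-incident (a matching). -/
def IsDimerConfig (N : ℕ) (D : Finset (Sym2 (Fin N))) : Prop :=
  (∀ e ∈ D, ¬ e.IsDiag) ∧
  ∀ e ∈ D, ∀ f ∈ D, e ≠ f → ∀ v : Fin N, ¬(v ∈ e ∧ v ∈ f)

open Classical in
/-- The configuration space `𝒟_N` of all dimer configurations on `K_N`. -/
noncomputable def dimerConfigs (N : ℕ) : Finset (Finset (Sym2 (Fin N))) :=
  Finset.univ.filter (fun D => IsDimerConfig N D)

/-- The number of monomers `S_N(D) = N - 2|D|` (as a real number). -/
def monomerCount (N : ℕ) (D : Finset (Sym2 (Fin N))) : ℝ := (N : ℝ) - 2 * D.card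

/-- The monomer density `m_N(D) = S_N(D)/N`. -/
def monomerDensity (N : ℕ) (D : Finset (Sym2 (Fin N))) : ℝ := monomerCount N D / N

/-- `g(h) = (e^h/2)(√(e^{2h}+4) − e^h)`. -/
def gFun (h : ℝ) : ℝ := Real.exp h / 2 * (Real.sqrt (Real.exp (2*h) + 4) - Real.exp h)

/-- `p⁰(h) = −(1−g(h))/2 − (1/2)·log(1−g(h))`. -/
def p0 (h : ℝ) : ℝ := -(1 - gFun h)/2 - (1/2) * Real.log (1 - gFun h)

/-- Variational pressure `p̃(m) = −Jm² + p⁰((2m−1)J + h)`. -/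
def ptilde (h J m : ℝ) : ℝ := -J * m^2 + p0 ((2*m - 1) * J + h)

/-- Pure hard-core partition function `Z_N⁰(a) = Σ_D N^{−|D|} e^{a·S_N(D)}`. -/
def Z0 (N : ℕ) (a : ℝ) : ℝ :=
  ∑ D ∈ dimerConfigs N, (N : ℝ) ^ (-(D.card : ℤ)) * Real.exp (a * monomerCount N D)

/-- Pure hard-core pressure density `p_N⁰(a) = (1/N) log Z_N⁰(a)`. -/
def p0N (N : ℕ) (a : ℝ) : ℝ := (1 / (N : ℝ)) * Real.log (Z0 N a)

/-- Minus the IMD Hamiltonian: `−H_N(D) = N((h−J)m_N(D) + J m_N(D)²)`. -/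
def negH (N : ℕ) (h J : ℝ) (D : Finset (Sym2 (Fin N))) : ℝ :=
  (N : ℝ) * ((h - J) * monomerDensity N D + J * (monomerDensity N D)^2)

/-- The IMD partition function `Z_N = Σ_D N^{−|D|} e^{−H_N(D)}`. -/
def ZIMD (N : ℕ) (h J : ℝ) : ℝ :=
  ∑ D ∈ dimerConfigs N, (N : ℝ) ^ (-(D.card : ℤ)) * Real.exp (negH N h J D)

/-- The IMD pressure density `p_N = (1/N) log Z_N`. -/
def pIMD (N : ℕ) (h J : ℝ) : ℝ := (1 / (N : ℝ)) * Real.log (ZIMD N h J)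

/-- Expectation of an observable `f` under the IMD Gibbs measure `μ_N`. -/
def gibbsExp (N : ℕ) (h J : ℝ) (f : Finset (Sym2 (Fin N)) → ℝ) : ℝ :=
  (∑ D ∈ dimerConfigs N, (N : ℝ) ^ (-(D.card : ℤ)) * Real.exp (negH N h J D) * f D)
    / ZIMD N h J

/-- `F_N(x) = −Jx² + p_N⁰(2Jx + h − J)`. -/
def FN (h J : ℝ) (N : ℕ) (x : ℝ) : ℝ := -J * x^2 + p0N N (2*J*x + h - J)

/-!
Grouping the dimer configurations by their number `k` of dimers, and bounding the number of
`k`-matchings of `K_N` by `N! / ((N - 2k)! k! 2^k)`, every term of `Z_N⁰(a)` is at most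
`e N e^{N p⁰(a)}`: after Stirling's bounds this is two instances of Gibbs' inequality
`x log (y / x) ≤ y - x`, with `y = N g(a)` and `y = N (1 - g(a)) / 2`. Hence
`e^{N F_N(x)} ≤ 2 e N² e^{N p̃(x)}`. As `p̃` is continuous and `p̃(x) ≤ c - J x² / 2`, it stays
below `M - δ` on `C` for some `δ > 0`, and `e^{N p̃} ≤ e^{(N - 1)(M - δ)} e^{p̃}` with `e^{p̃}`
integrable. The polynomial prefactor is absorbed by halving `δ`.
-/

open Finset
open scoped Nat

section Orientation

variable {α : Type*}

def sym2Endpoint (e : Sym2 α) (t : Bool) : α := if t then e.out.1 else e.out.2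

lemma sym2Endpoint_mem (e : Sym2 α) (t : Bool) : sym2Endpoint e t ∈ e := by
  cases t
  · exact Sym2.out_snd_mem e
  · exact Sym2.out_fst_mem e

lemma mk_sym2Endpoint_xor (e : Sym2 α) (c : Bool) :
    s(sym2Endpoint e (xor true c), sym2Endpoint e (xor false c)) = e := by
  cases c
  · exact e.out_eq
  · exact Sym2.eq_swap.trans e.out_eq

lemma sym2Endpoint_injective {e : Sym2 α} (he : ¬ e.IsDiag) :
    Function.Injective (sym2Endpoint e) := by
  have hne : e.out.1 ≠ e.out.2 := fun h => he (by rw [← e.out_eq]; exact Sym2.mk_isDiag_iff.mpr h)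
  intro t t' htt'
  cases t <;> cases t' <;> simp_all [sym2Endpoint, eq_comm]

end Orientation

theorem card_dimerConfigs_card_eq_mul_le (N k : ℕ) :
    #{D ∈ dimerConfigs N | D.card = k} * (k ! * 2 ^ k) ≤ N.descFactorial (2 * k) := by
  classical
  set S := {D ∈ dimerConfigs N | D.card = k}
  have hS : ∀ D ∈ S, IsDimerConfig N D ∧ D.card = k := fun D hD => by
    simpa [S, dimerConfigs] using hD
  let enum (D : S) : Fin k ≃ D.1 :=
    (Fintype.equivFinOfCardEq ((Fintype.card_coe _).trans (hS D D.2).2)).symm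
  -- An ordering of the edges of a `k`-matching and an orientation of each edge give an injection
  -- `Fin k × Bool ↪ Fin N`.
  let F (x : S × Equiv.Perm (Fin k) × (Fin k → Bool)) (p : Fin k × Bool) : Fin N :=
    sym2Endpoint (enum x.1 (x.2.1 p.1)) (xor p.2 (x.2.2 p.1))
  have hedge (x) (i : Fin k) : s(F x (i, true), F x (i, false)) = enum x.1 (x.2.1 i) :=
    mk_sym2Endpoint_xor _ _
  have hdiag (x : S × Equiv.Perm (Fin k) × (Fin k → Bool)) (i : Fin k) :
      ¬ (enum x.1 (x.2.1 i) : Sym2 (Fin N)).IsDiag :=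
    (hS _ x.1.2).1.1 _ (enum x.1 _).2
  have hF (x) : Function.Injective (F x) := by
    rintro ⟨i, t⟩ ⟨i', t'⟩ hv
    obtain rfl : i = i' := by
      by_contra hii
      have hne : (enum x.1 (x.2.1 i) : Sym2 (Fin N)) ≠ enum x.1 (x.2.1 i') := fun h =>
        hii (x.2.1.injective ((enum x.1).injective (Subtype.ext h)))
      exact (hS _ x.1.2).1.2 _ (enum x.1 _).2 _ (enum x.1 _).2 hne (F x (i, t))
        ⟨sym2Endpoint_mem _ _, by rw [hv]; exact sym2Endpoint_mem _ _⟩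
    have := sym2Endpoint_injective (hdiag x i) hv
    cases t <;> cases t' <;> simp_all
  have hFemb : Function.Injective (fun x => (⟨F x, hF x⟩ : Fin k × Bool ↪ Fin N)) := by
    rintro ⟨D, σ, b⟩ ⟨D', σ', b'⟩ hxx
    have hFF : F (D, σ, b) = F (D', σ', b') := congrArg (⇑) hxx
    have hee (i : Fin k) : (enum D (σ i) : Sym2 (Fin N)) = enum D' (σ' i) := by
      rw [← hedge (D, σ, b), ← hedge (D', σ', b'), hFF]
    have hsub {E E' : S} {τ τ' : Equiv.Perm (Fin k)}
        (h : ∀ i, (enum E (τ i) : Sym2 (Fin N)) = enum E' (τ' i)) : E.1 ⊆ E'.1 := fun e he => by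
      have := h (τ.symm ((enum E).symm ⟨e, he⟩))
      simp only [Equiv.apply_symm_apply] at this
      exact this ▸ (enum E' _).2
    obtain rfl : D = D' := Subtype.ext (subset_antisymm (hsub hee) (hsub fun i => (hee i).symm))
    obtain rfl : σ = σ' := Equiv.ext fun i => (enum D).injective (Subtype.ext (hee i))
    obtain rfl : b = b' := funext fun i => by
      have := sym2Endpoint_injective (hdiag (D, σ, b) i) (congrFun hFF (i, true))
      cases hb : b i <;> cases hb' : b' i <;> simp_all
    rfl
  have hcard := Fintype.card_le_of_injective _ hFemb
  simpa [Fintype.card_perm, Fintype.card_embedding_eq, two_mul, mul_comm] using hcard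

lemma two_mul_card_le_of_mem_dimerConfigs {N : ℕ} {D : Finset (Sym2 (Fin N))}
    (hD : D ∈ dimerConfigs N) : 2 * D.card ≤ N := by
  classical
  by_contra! hlt
  have hcount := card_dimerConfigs_card_eq_mul_le N D.card
  rw [Nat.descFactorial_eq_zero_iff_lt.mpr hlt, Nat.le_zero, mul_eq_zero,
    Finset.card_eq_zero, Finset.filter_eq_empty_iff] at hcount
  rcases hcount with hempty | hzero
  · exact hempty hD rfl
  · exact absurd hzero (by positivity)

lemma Z0_pos (N : ℕ) (a : ℝ) : 0 < Z0 N a := by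
  classical
  have hempty : (∅ : Finset (Sym2 (Fin N))) ∈ dimerConfigs N := by
    simp [dimerConfigs, IsDimerConfig]
  refine Finset.sum_pos' (fun D _ => by positivity) ⟨∅, hempty, by simp [monomerCount]; positivity⟩

lemma exp_two_mul_eq_sq (a : ℝ) : exp (2 * a) = exp a ^ 2 := by
  rw [two_mul, exp_add, sq]

lemma sq_sqrt_exp_two_mul_add_four (a : ℝ) : √(exp (2 * a) + 4) ^ 2 = exp a ^ 2 + 4 := by
  rw [Real.sq_sqrt (by positivity), exp_two_mul_eq_sq]

lemma gFun_eq_div (a : ℝ) : gFun a = 2 * exp a / (√(exp (2 * a) + 4) + exp a) := by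
  rw [gFun, eq_div_iff (by positivity)]
  linear_combination exp a / 2 * sq_sqrt_exp_two_mul_add_four a

lemma gFun_pos (a : ℝ) : 0 < gFun a := by
  rw [gFun_eq_div]; positivity

lemma gFun_lt_one (a : ℝ) : gFun a < 1 := by
  have hs : exp a < √(exp (2 * a) + 4) := by
    rw [Real.lt_sqrt (exp_pos a).le, exp_two_mul_eq_sq]; linarith
  rw [gFun_eq_div, div_lt_one (by positivity)]
  linarith

lemma gFun_sq (a : ℝ) : gFun a ^ 2 = exp a ^ 2 * (1 - gFun a) := by
  rw [gFun]
  linear_combination exp a ^ 2 / 4 * sq_sqrt_exp_two_mul_add_four a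

lemma log_one_sub_gFun (a : ℝ) : log (1 - gFun a) = 2 * log (gFun a) - 2 * a := by
  have h : 1 - gFun a = gFun a ^ 2 / exp a ^ 2 := by
    rw [gFun_sq, mul_div_cancel_left₀ _ (by positivity)]
  rw [h, Real.log_div (by positivity [gFun_pos a]) (by positivity), Real.log_pow, Real.log_pow,
    Real.log_exp]
  push_cast; ring

lemma exp_div_exp_add_one_le_gFun (a : ℝ) : exp a / (exp a + 1) ≤ gFun a := by
  have hs : √(exp (2 * a) + 4) ≤ exp a + 2 := by
    rw [Real.sqrt_le_left (by positivity), exp_two_mul_eq_sq]; nlinarith [exp_pos a]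
  rw [gFun_eq_div, div_le_div_iff₀ (by positivity) (by positivity)]
  nlinarith [exp_pos a]

lemma p0_le_log_two_add_abs (a : ℝ) : p0 a ≤ log 2 + |a| := by
  have hG := gFun_pos a
  have hlog : a - log (gFun a) ≤ log (exp a + 1) := by
    have := Real.log_le_log (by positivity) (exp_div_exp_add_one_le_gFun a)
    rw [Real.log_div (exp_pos a).ne' (by positivity), Real.log_exp] at this
    linarith
  have hexp : exp a + 1 ≤ 2 * exp |a| := by
    linarith [exp_le_exp.mpr (le_abs_self a), one_le_exp (abs_nonneg a)]
  have hlog2 := Real.log_le_log (by positivity) hexp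
  rw [Real.log_mul two_ne_zero (exp_pos _).ne', Real.log_exp] at hlog2
  rw [p0, log_one_sub_gFun]
  linarith [gFun_lt_one a]

lemma continuous_p0 : Continuous p0 := by
  have hg : Continuous gFun := by unfold gFun; fun_prop
  have hlog : Continuous fun a => log (1 - gFun a) :=
    (continuous_const.sub hg).log fun a => (sub_pos.2 (gFun_lt_one a)).ne'
  unfold p0
  fun_prop

lemma log_factorial_ge (n : ℕ) : n * log n - n ≤ log (n ! : ℝ) := by
  rcases n.eq_zero_or_pos with rfl | hn
  · simp
  have h := Real.pow_div_factorial_le_exp (x := n) (Nat.cast_nonneg n) n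
  rw [← Real.log_le_iff_le_exp (by positivity), Real.log_div (by positivity) (by positivity),
    Real.log_pow] at h
  linarith

lemma log_factorial_le {n : ℕ} (hn : n ≠ 0) :
    log (n ! : ℝ) ≤ n * log n - n + log n / 2 + 1 := by
  obtain ⟨m, rfl⟩ := Nat.exists_eq_succ_of_ne_zero hn
  have h := Stirling.log_stirlingSeq'_antitone (Nat.zero_le m)
  simp only [Function.comp, Stirling.log_stirlingSeq_formula] at h
  have hm : (0 : ℝ) < (m.succ : ℝ) := by positivity
  rw [Real.log_mul two_ne_zero hm.ne', Real.log_div hm.ne' (exp_pos 1).ne', Real.log_exp] at h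
  simp only [Nat.factorial_one, Nat.cast_one, Real.log_one, mul_one, one_mul, one_div,
    Real.log_inv, Real.log_exp] at h
  push_cast at h ⊢
  linarith

lemma mul_log_sub_mul_log_le {x y : ℝ} (hx : 0 ≤ x) (hy : 0 < y) :
    x * log y - x * log x ≤ y - x := by
  rcases hx.eq_or_lt with rfl | hx
  · simpa using hy.le
  have h := mul_le_mul_of_nonneg_left (Real.log_le_sub_one_of_pos (div_pos hy hx)) hx.le
  rw [Real.log_div hy.ne' hx.ne', mul_sub, mul_sub, mul_div_cancel₀ _ hx.ne', mul_one] at h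
  exact h

/-- The left side is Stirling's approximation of the logarithm of the `k`-dimer part of `Z0 N a`,
with `m = N - 2k` monomers. -/
lemma entropy_add_field_le_mul_p0 (a : ℝ) {N m k : ℕ} (hN : N ≠ 0) (hmk : m + 2 * k = N) :
    (m + k) * log N - m * log m - k * log k - k - k * log 2 + a * m ≤ N * p0 a := by
  have hG := gFun_pos a
  have hG1 := sub_pos.2 (gFun_lt_one a)
  have hNpos : (0 : ℝ) < N := by positivity
  have h1 := mul_log_sub_mul_log_le (Nat.cast_nonneg m) (mul_pos hNpos hG)
  have h2 := mul_log_sub_mul_log_le (Nat.cast_nonneg k) (half_pos (mul_pos hNpos hG1))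
  rw [Real.log_mul hNpos.ne' hG.ne'] at h1
  rw [Real.log_div (mul_pos hNpos hG1).ne' two_ne_zero, Real.log_mul hNpos.ne' hG1.ne',
    log_one_sub_gFun] at h2
  have hNmk : (N : ℝ) = m + 2 * k := by rw [← hmk]; push_cast; ring
  rw [p0, log_one_sub_gFun]
  rw [hNmk] at h1 h2 ⊢
  linear_combination h1 + h2

lemma card_mul_weight_le (a : ℝ) {N k : ℕ} (hN : N ≠ 0) (hk : 2 * k ≤ N) :
    (#{D ∈ dimerConfigs N | D.card = k} : ℝ) * ((N : ℝ) ^ (-(k : ℤ)) * exp (a * (N - 2 * k)))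
      ≤ exp 1 * N * exp (N * p0 a) := by
  set m := N - 2 * k
  have hmk : m + 2 * k = N := Nat.sub_add_cancel hk
  have hNpos : (0 : ℝ) < N := by positivity
  have hcount : (#{D ∈ dimerConfigs N | D.card = k} : ℝ) ≤ N ! / (m ! * (k ! * 2 ^ k)) := by
    rw [le_div_iff₀ (by positivity), ← Nat.factorial_mul_descFactorial hk]
    exact_mod_cast (Nat.mul_le_mul_left _ (card_dimerConfigs_card_eq_mul_le N k)).trans_eq'
      (by ring)
  have hrate : log (N ! : ℝ) - log (m ! : ℝ) - log (k ! : ℝ) - k * log 2 - k * log N + a * m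
      ≤ 1 + log N + N * p0 a := by
    have hNmk : (N : ℝ) = m + 2 * k := by rw [← hmk]; push_cast; ring
    have hlogN : 0 ≤ log (N : ℝ) := Real.log_nonneg (by exact_mod_cast Nat.one_le_iff_ne_zero.2 hN)
    linear_combination entropy_add_field_le_mul_p0 a hN hmk + log_factorial_le hN +
      log_factorial_ge m + log_factorial_ge k + hlogN / 2 + (log N - 1) * hNmk
  calc (#{D ∈ dimerConfigs N | D.card = k} : ℝ) * ((N : ℝ) ^ (-(k : ℤ)) * exp (a * (N - 2 * k)))
      ≤ N ! / (m ! * (k ! * 2 ^ k)) * ((N : ℝ) ^ (-(k : ℤ)) * exp (a * m)) := by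
        rw [show ((m : ℕ) : ℝ) = N - 2 * k by rw [← hmk]; push_cast; ring]
        gcongr
    _ = exp (log (N ! : ℝ) - log (m ! : ℝ) - log (k ! : ℝ) - k * log 2 - k * log N + a * m) := by
        simp only [exp_add, exp_sub, Real.exp_nat_mul, zpow_neg, zpow_natCast]
        rw [Real.exp_log (by positivity), Real.exp_log (by positivity),
          Real.exp_log (by positivity), Real.exp_log two_pos, Real.exp_log hNpos]
        field_simp
    _ ≤ exp (1 + log N + N * p0 a) := exp_le_exp.mpr hrate
    _ = exp 1 * N * exp (N * p0 a) := by rw [exp_add, exp_add, Real.exp_log hNpos]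

lemma Z0_le (a : ℝ) {N : ℕ} (hN : N ≠ 0) : Z0 N a ≤ 2 * exp 1 * N ^ 2 * exp (N * p0 a) := by
  classical
  have hZ : Z0 N a = ∑ k ∈ (dimerConfigs N).image Finset.card,
      #{D ∈ dimerConfigs N | D.card = k} • ((N : ℝ) ^ (-(k : ℤ)) * exp (a * (N - 2 * k))) :=
    Finset.sum_comp (fun k : ℕ => (N : ℝ) ^ (-(k : ℤ)) * exp (a * (N - 2 * k))) Finset.card
  have himage : (dimerConfigs N).image Finset.card ⊆ range (N + 1) := by
    simp only [subset_iff, mem_image, mem_range, forall_exists_index, and_imp]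
    rintro _ D hD rfl
    have := two_mul_card_le_of_mem_dimerConfigs hD
    omega
  have hN1 : (1 : ℝ) ≤ N := by exact_mod_cast Nat.one_le_iff_ne_zero.2 hN
  calc Z0 N a ≤ ∑ _k ∈ (dimerConfigs N).image Finset.card, exp 1 * N * exp (N * p0 a) := by
        rw [hZ]
        refine sum_le_sum fun k hk => ?_
        obtain ⟨D, hD, rfl⟩ := mem_image.mp hk
        rw [nsmul_eq_mul]
        exact card_mul_weight_le a hN (two_mul_card_le_of_mem_dimerConfigs hD)
    _ ≤ (N + 1) * (exp 1 * N * exp (N * p0 a)) := by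
        rw [sum_const, nsmul_eq_mul]
        gcongr
        exact_mod_cast (card_le_card himage).trans_eq (card_range _)
    _ = (N + 1) * N * (exp 1 * exp (N * p0 a)) := by ring
    _ ≤ 2 * N ^ 2 * (exp 1 * exp (N * p0 a)) :=
        mul_le_mul_of_nonneg_right (by nlinarith) (by positivity)
    _ = 2 * exp 1 * N ^ 2 * exp (N * p0 a) := by ring

lemma ptilde_le (h : ℝ) {J : ℝ} (hJ : 0 ≤ J) (x : ℝ) :
    ptilde h J x ≤ log 2 + |h - J| + 2 * J - J / 2 * x ^ 2 := by
  have hp := p0_le_log_two_add_abs ((2 * x - 1) * J + h)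
  have habs : |(2 * x - 1) * J + h| ≤ 2 * J * |x| + |h - J| := by
    calc |(2 * x - 1) * J + h| = |2 * J * x + (h - J)| := by ring_nf
      _ ≤ |2 * J * x| + |h - J| := abs_add_le _ _
      _ = 2 * J * |x| + |h - J| := by rw [abs_mul, abs_of_nonneg (by positivity)]
  have hquad : 0 ≤ J / 2 * (|x| - 2) ^ 2 := by positivity
  rw [ptilde]
  nlinarith [sq_abs x]

lemma continuous_ptilde (h J : ℝ) : Continuous (ptilde h J) := by
  have := continuous_p0
  unfold ptilde
  fun_prop

lemma bddAbove_range_ptilde (h : ℝ) {J : ℝ} (hJ : 0 ≤ J) : BddAbove (Set.range (ptilde h J)) :=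
  ⟨log 2 + |h - J| + 2 * J, by
    rintro _ ⟨x, rfl⟩
    nlinarith [ptilde_le h hJ x, sq_nonneg x]⟩

lemma tendsto_ptilde_cocompact (h : ℝ) {J : ℝ} (hJ : 0 < J) :
    Tendsto (ptilde h J) (cocompact ℝ) atBot := by
  have hsq : Tendsto (fun x : ℝ => J / 2 * x ^ 2) (cocompact ℝ) atTop := by
    have := ((tendsto_pow_atTop two_ne_zero).comp
      (tendsto_norm_cocompact_atTop (E := ℝ))).const_mul_atTop (half_pos hJ)
    simpa only [Function.comp_def, Real.norm_eq_abs, sq_abs] using this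
  exact tendsto_atBot_mono (fun x => (ptilde_le h hJ.le x).trans_eq (sub_eq_add_neg _ _))
    (tendsto_atBot_add_const_left _ _ (tendsto_neg_atTop_atBot.comp hsq))

lemma integrable_exp_ptilde (h : ℝ) {J : ℝ} (hJ : 0 < J) :
    Integrable fun x => exp (ptilde h J x) := by
  refine ((integrable_exp_neg_mul_sq (half_pos hJ)).const_mul
    (exp (log 2 + |h - J| + 2 * J))).mono'
    (continuous_exp.comp (continuous_ptilde h J)).aestronglyMeasurable (ae_of_all _ fun x => ?_)
  rw [Real.norm_of_nonneg (exp_pos _).le, ← exp_add]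
  exact exp_le_exp.mpr ((ptilde_le h hJ.le x).trans_eq (by ring))

lemma exp_mul_FN_le (h J x : ℝ) {N : ℕ} (hN : N ≠ 0) :
    exp (N * FN h J N x) ≤ 2 * exp 1 * N ^ 2 * exp (N * ptilde h J x) := by
  have hNpos : (0 : ℝ) < N := by positivity
  have hFN : exp (N * FN h J N x) = exp (N * (-J * x ^ 2)) * Z0 N (2 * J * x + h - J) := by
    rw [FN, p0N, mul_add, exp_add, ← mul_assoc (N : ℝ) (1 / N), mul_one_div_cancel hNpos.ne',
      one_mul, Real.exp_log (Z0_pos _ _)]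
  have hpt : N * ptilde h J x = N * (-J * x ^ 2) + N * p0 (2 * J * x + h - J) := by
    rw [ptilde, mul_add]; ring_nf
  rw [hFN, hpt, exp_add]
  calc exp (N * (-J * x ^ 2)) * Z0 N (2 * J * x + h - J)
      ≤ exp (N * (-J * x ^ 2)) * (2 * exp 1 * N ^ 2 * exp (N * p0 (2 * J * x + h - J))) := by
        gcongr; exact Z0_le _ hN
    _ = _ := by ring

lemma setIntegral_exp_mul_FN_le (h : ℝ) {J : ℝ} (hJ : 0 < J) {N : ℕ} (hN : N ≠ 0) {C : Set ℝ}
    (hC : MeasurableSet C) {L : ℝ} (hL : ∀ x ∈ C, ptilde h J x ≤ L) :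
    ∫ x in C, exp (N * FN h J N x)
      ≤ 2 * exp 1 * N ^ 2 * exp ((N - 1) * L) * ∫ x, exp (ptilde h J x) := by
  have hN1 : (1 : ℝ) ≤ N := by exact_mod_cast Nat.one_le_iff_ne_zero.2 hN
  have hbound : ∀ x ∈ C, exp (N * FN h J N x)
      ≤ 2 * exp 1 * N ^ 2 * exp ((N - 1) * L) * exp (ptilde h J x) := by
    intro x hx
    calc exp (N * FN h J N x) ≤ 2 * exp 1 * N ^ 2 * exp (N * ptilde h J x) :=
          exp_mul_FN_le h J x hN
      _ ≤ 2 * exp 1 * N ^ 2 * exp ((N - 1) * L + ptilde h J x) := by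
          gcongr; nlinarith [hL x hx]
      _ = _ := by rw [exp_add]; ring
  calc ∫ x in C, exp (N * FN h J N x)
      ≤ ∫ x in C, 2 * exp 1 * N ^ 2 * exp ((N - 1) * L) * exp (ptilde h J x) :=
        integral_mono_of_nonneg (ae_of_all _ fun x => (exp_pos _).le)
          ((integrable_exp_ptilde h hJ).const_mul _).integrableOn
          ((ae_restrict_iff' hC).mpr (ae_of_all _ hbound))
    _ = 2 * exp 1 * N ^ 2 * exp ((N - 1) * L) * ∫ x in C, exp (ptilde h J x) :=
        integral_const_mul _ _
    _ ≤ 2 * exp 1 * N ^ 2 * exp ((N - 1) * L) * ∫ x, exp (ptilde h J x) :=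
        mul_le_mul_of_nonneg_left (setIntegral_le_integral (integrable_exp_ptilde h hJ)
          (ae_of_all _ fun x => (exp_pos _).le)) (by positivity)

theorem exists_pos_forall_le_sSup_sub {X : Type*} [TopologicalSpace X] {f : X → ℝ}
    (hf : Continuous f) (hbdd : BddAbove (Set.range f)) (hf_coc : Tendsto f (cocompact X) atBot)
    {C : Set X} (hC : IsClosed C) (hC_max : ∀ x ∈ C, ∃ y, f x < f y) :
    ∃ δ > 0, ∀ x ∈ C, f x ≤ sSup (Set.range f) - δ := by
  set M := sSup (Set.range f)
  have hlt (x) (hx : x ∈ C) : f x < M :=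
    let ⟨y, hy⟩ := hC_max x hx
    hy.trans_le (le_csSup hbdd ⟨y, rfl⟩)
  obtain ⟨K, hK, hKc⟩ := mem_cocompact.mp (hf_coc (Iio_mem_atBot (M - 1)))
  have hout (x) (hx : x ∉ K) : f x ≤ M - 1 := (hKc hx).le
  rcases (C ∩ K).eq_empty_or_nonempty with hempty | hne
  · exact ⟨1, one_pos, fun x hx => hout x fun hxK => hempty.subset ⟨hx, hxK⟩⟩
  obtain ⟨z, hz, hzmax⟩ := (hK.inter_left hC).exists_isMaxOn hne hf.continuousOn
  refine ⟨min 1 (M - f z), lt_min one_pos (sub_pos.2 (hlt z hz.1)), fun x hx => ?_⟩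
  by_cases hxK : x ∈ K
  · linarith [show f x ≤ f z from hzmax ⟨hx, hxK⟩, min_le_right 1 (M - f z)]
  · linarith [hout x hxK, min_le_left 1 (M - f z)]

lemma sq_mul_exp_neg_mul_le {δ x : ℝ} (hδ : 0 < δ) (hx : 0 ≤ x) :
    x ^ 2 * exp (-(δ * x)) ≤ 2 / δ ^ 2 := by
  have h := Real.pow_div_factorial_le_exp (x := δ * x) (mul_nonneg hδ.le hx) 2
  rw [Nat.factorial_two, Nat.cast_ofNat, div_le_iff₀ two_pos] at h
  rw [le_div_iff₀ (by positivity), exp_neg]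
  calc x ^ 2 * (exp (δ * x))⁻¹ * δ ^ 2 = (δ * x) ^ 2 * (exp (δ * x))⁻¹ := by ring
    _ ≤ exp (δ * x) * 2 * (exp (δ * x))⁻¹ := by gcongr
    _ = 2 := by field_simp

/-- away from the global maximum points of `p̃`, the integral of
`e^{N·F_N}` is exponentially negligible with respect to `e^{N·M}`,
`M = max p̃`. -/
theorem laplace_cutoff (h J : ℝ) (hJ : 0 < J) (C : Set ℝ) (hC : IsClosed C)
    (hCnomax : ∀ x ∈ C, ¬ (∀ y : ℝ, ptilde h J y ≤ ptilde h J x)) :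
    ∃ ε > (0:ℝ), ∃ B : ℝ, ∀ N : ℕ, 1 ≤ N →
      Real.exp (-(N : ℝ) * sSup (Set.range (ptilde h J))) *
        ∫ x in C, Real.exp ((N : ℝ) * FN h J N x)
      ≤ B * Real.exp (-(N : ℝ) * ε) := by
  obtain ⟨δ, hδ, hgap⟩ := exists_pos_forall_le_sSup_sub (continuous_ptilde h J)
    (bddAbove_range_ptilde h hJ.le) (tendsto_ptilde_cocompact h hJ) hC
    fun x hx => by simpa using hCnomax x hx
  set M := sSup (Set.range (ptilde h J))
  set I := ∫ x, exp (ptilde h J x)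
  have hI : 0 ≤ I := integral_nonneg fun _ => (exp_pos _).le
  refine ⟨δ / 2, half_pos hδ, 16 / δ ^ 2 * exp (1 + δ - M) * I, fun N hN => ?_⟩
  have hN0 : N ≠ 0 := Nat.one_le_iff_ne_zero.mp hN
  have hpoly := sq_mul_exp_neg_mul_le (half_pos hδ) (Nat.cast_nonneg (α := ℝ) N)
  have hexp : exp (-N * M) * exp 1 * exp ((N - 1) * (M - δ))
      = exp (-(δ / 2 * N)) * exp (1 + δ - M) * exp (-N * (δ / 2)) := by
    simp only [← exp_add]; ring_nf
  calc exp (-N * M) * ∫ x in C, exp (N * FN h J N x)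
      ≤ exp (-N * M) * (2 * exp 1 * N ^ 2 * exp ((N - 1) * (M - δ)) * I) :=
        mul_le_mul_of_nonneg_left (setIntegral_exp_mul_FN_le h hJ hN0 hC.measurableSet hgap)
          (exp_pos _).le
    _ = 2 * (N ^ 2 * exp (-(δ / 2 * N))) * exp (1 + δ - M) * I * exp (-N * (δ / 2)) := by
        linear_combination 2 * N ^ 2 * I * hexp
    _ ≤ 2 * (2 / (δ / 2) ^ 2) * exp (1 + δ - M) * I * exp (-N * (δ / 2)) := by gcongr
    _ = 16 / δ ^ 2 * exp (1 + δ - M) * I * exp (-N * (δ / 2)) := by ring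
end
end

section
/- Let (f_n) be a sequence of continuous real-valued functions on a compact set K ⊂ ℝ converging uniformly to f. Let (I_n) and I be nonempty compact subsets of K with the Hausdorff distance between I_n and I tending to 0 as n → ∞. Then max_{I_n} f_n → max_I f; moreover, if f has a unique global maximum point x̂ on I, then any sequence of points x̂_n at which f_n attains its maximum on I_n converges to x̂. -/
open MeasureTheory Filter Real

noncomputable section

/-- The sup of the image of a set under a function equals the value at a maximizer. -/
lemma sSup_image_eq_of_isMaxOn {g : ℝ → ℝ} {s : Set ℝ} {x : ℝ} (hx : x ∈ s)
    (hmax : IsMaxOn g s x) : sSup (g '' s) = g x := by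
  apply le_antisymm
  · refine csSup_le ⟨g x, ⟨x, hx, rfl⟩⟩ ?_
    rintro _ ⟨y, hy, rfl⟩
    exact hmax hy
  · exact le_csSup ⟨g x, by rintro _ ⟨y, hy, rfl⟩; exact hmax hy⟩ ⟨x, hx, rfl⟩

/-- stability of maxima under uniform convergence and Hausdorff
convergence of the constraint sets. -/
theorem max_stability_uniform_hausdorff (K : Set ℝ) (hK : IsCompact K)
    (f : ℕ → ℝ → ℝ) (flim : ℝ → ℝ)
    (hcont : ∀ n : ℕ, ContinuousOn (f n) K)
    (hconv : TendstoUniformlyOn f flim atTop K)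
    (I : ℕ → Set ℝ) (Ilim : Set ℝ)
    (hI : ∀ n : ℕ, (I n).Nonempty ∧ IsCompact (I n) ∧ I n ⊆ K)
    (hIlim : Ilim.Nonempty ∧ IsCompact Ilim ∧ Ilim ⊆ K)
    (hH : Tendsto (fun n : ℕ => Metric.hausdorffDist (I n) Ilim) atTop (nhds 0)) :
    Tendsto (fun n : ℕ => sSup (f n '' I n)) atTop (nhds (sSup (flim '' Ilim))) ∧
    ∀ xhat ∈ Ilim, (∀ y ∈ Ilim, y ≠ xhat → flim y < flim xhat) →
      ∀ xhatn : ℕ → ℝ, (∀ n : ℕ, xhatn n ∈ I n ∧ IsMaxOn (f n) (I n) (xhatn n)) →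
        Tendsto xhatn atTop (nhds xhat) := by
  obtain ⟨hIlne, hIlcpt, hIlK⟩ := hIlim
  -- continuity of the limit function
  have hflimcont : ContinuousOn flim K :=
    hconv.continuousOn (Frequently.of_forall hcont)
  -- uniform continuity of flim on K
  have hUC : UniformContinuousOn flim K :=
    hK.uniformContinuousOn_of_continuous hflimcont
  -- finiteness of Hausdorff edistances
  have hfin : ∀ n, EMetric.hausdorffEdist (I n) Ilim ≠ ⊤ := fun n =>
    Metric.hausdorffEdist_ne_top_of_nonempty_of_bounded (hI n).1 hIlne
      (hI n).2.1.isBounded hIlcpt.isBounded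
  -- maximizer of flim on Ilim
  obtain ⟨b, hbI, hbmax⟩ := hIlcpt.exists_isMaxOn hIlne (hflimcont.mono hIlK)
  have hM : sSup (flim '' Ilim) = flim b := sSup_image_eq_of_isMaxOn hbI hbmax
  -- maximizers of f n on I n
  have hmaxn : ∀ n, ∃ a ∈ I n, IsMaxOn (f n) (I n) a := fun n =>
    (hI n).2.1.exists_isMaxOn (hI n).1 ((hcont n).mono (hI n).2.2)
  -- Part 1
  have part1 : Tendsto (fun n : ℕ => sSup (f n '' I n)) atTop
      (nhds (sSup (flim '' Ilim))) := by
    rw [Metric.tendsto_atTop]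
    intro ε hε
    obtain ⟨δ, hδpos, hδ⟩ := (Metric.uniformContinuousOn_iff.mp hUC) (ε / 3)
      (by linarith)
    have h1 : ∀ᶠ n in atTop, ∀ x ∈ K, dist (flim x) (f n x) < ε / 3 :=
      (Metric.tendstoUniformlyOn_iff.mp hconv) (ε / 3) (by linarith)
    have h2 : ∀ᶠ n in atTop, Metric.hausdorffDist (I n) Ilim < δ :=
      hH.eventually_lt_const hδpos
    obtain ⟨N, hN⟩ := (h1.and h2).exists_forall_of_atTop
    refine ⟨N, fun n hn => ?_⟩
    obtain ⟨hunif, hhd⟩ := hN n hn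
    obtain ⟨a, haI, hamax⟩ := hmaxn n
    have hMn : sSup (f n '' I n) = f n a := sSup_image_eq_of_isMaxOn haI hamax
    rw [Real.dist_eq, hMn, hM]
    rw [abs_sub_lt_iff]
    constructor
    · -- f n a - flim b < ε
      obtain ⟨b', hb'I, hab'⟩ :=
        Metric.exists_dist_lt_of_hausdorffDist_lt haI hhd (hfin n)
      have haK : a ∈ K := (hI n).2.2 haI
      have hb'K : b' ∈ K := hIlK hb'I
      have e1 : dist (flim a) (f n a) < ε / 3 := hunif a haK
      have e2 : dist (flim a) (flim b') < ε / 3 := hδ a haK b' hb'K hab'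
      have e3 : flim b' ≤ flim b := hbmax hb'I
      have := abs_lt.mp (e1.trans_le le_rfl)
      have := abs_lt.mp (e2.trans_le le_rfl)
      rw [Real.dist_eq] at e1 e2
      have e1' := abs_lt.mp e1
      have e2' := abs_lt.mp e2
      linarith [e1'.1, e2'.2]
    · -- flim b - f n a < ε
      obtain ⟨a', ha'I, hba'⟩ :=
        Metric.exists_dist_lt_of_hausdorffDist_lt' hbI hhd (hfin n)
      have ha'K : a' ∈ K := (hI n).2.2 ha'I
      have hbK : b ∈ K := hIlK hbI
      have e1 : dist (flim a') (f n a') < ε / 3 := hunif a' ha'K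
      have e2 : dist (flim a') (flim b) < ε / 3 :=
        hδ a' ha'K b hbK hba'
      have e3 : f n a' ≤ f n a := hamax ha'I
      rw [Real.dist_eq] at e1 e2
      have e1' := abs_lt.mp e1
      have e2' := abs_lt.mp e2
      linarith [e1'.2, e2'.1]
  refine ⟨part1, ?_⟩
  -- Part 2
  intro xhat hxhat huniq xhatn hxn
  apply tendsto_of_subseq_tendsto
  intro ns hns
  -- the sequence lies in the compact set K
  have hmem : ∀ i, xhatn (ns i) ∈ K := fun i => (hI (ns i)).2.2 (hxn (ns i)).1
  obtain ⟨x, hxK, φ, hφmono, hφtend⟩ := hK.tendsto_subseq hmem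
  refine ⟨φ, ?_⟩
  -- the relabeled index sequence tends to infinity
  have hmtend : Tendsto (fun i => ns (φ i)) atTop atTop :=
    hns.comp hφmono.tendsto_atTop
  set m : ℕ → ℕ := fun i => ns (φ i) with hm
  set y : ℕ → ℝ := fun i => xhatn (m i) with hy
  have hytend : Tendsto y atTop (nhds x) := hφtend
  -- x belongs to Ilim
  have hxIl : x ∈ Ilim := by
    have hle : ∀ i, Metric.infDist (y i) Ilim ≤ Metric.hausdorffDist (I (m i)) Ilim :=
      fun i => Metric.infDist_le_hausdorffDist_of_mem (hxn (m i)).1 (hfin (m i))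
    have hhd0 : Tendsto (fun i => Metric.hausdorffDist (I (m i)) Ilim) atTop (nhds 0) :=
      hH.comp hmtend
    have hsq : Tendsto (fun i => Metric.infDist (y i) Ilim) atTop (nhds 0) :=
      squeeze_zero (fun i => Metric.infDist_nonneg) hle hhd0
    have hcont' : Tendsto (fun i => Metric.infDist (y i) Ilim) atTop
        (nhds (Metric.infDist x Ilim)) :=
      ((Metric.continuous_infDist_pt Ilim).tendsto x).comp hytend
    have h0 : Metric.infDist x Ilim = 0 := tendsto_nhds_unique hcont' hsq
    exact (hIlcpt.isClosed.mem_iff_infDist_zero hIlne).mpr h0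
  -- f (m i) (y i) tends to flim x
  have hconv' : TendstoUniformlyOn (fun i => f (m i)) flim atTop K := by
    intro u hu
    exact hmtend.eventually (hconv u hu)
  have hywithin : Tendsto y atTop (nhdsWithin x K) :=
    tendsto_nhdsWithin_of_tendsto_nhds_of_eventually_within y hytend
      (Eventually.of_forall fun i => hmem (φ i))
  have hval : Tendsto (fun i => f (m i) (y i)) atTop (nhds (flim x)) :=
    hconv'.tendsto_comp (hflimcont.continuousWithinAt hxK) hywithin
  -- f (m i) (y i) is the max value, tending to sSup (flim '' Ilim)
  have hvalM : Tendsto (fun i => f (m i) (y i)) atTop (nhds (sSup (flim '' Ilim))) := by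
    have : ∀ i, f (m i) (y i) = sSup (f (m i) '' I (m i)) := fun i =>
      (sSup_image_eq_of_isMaxOn (hxn (m i)).1 (hxn (m i)).2).symm
    simpa [funext this, Function.comp_def] using part1.comp hmtend
  have hfx : flim x = sSup (flim '' Ilim) := tendsto_nhds_unique hval hvalM
  -- conclude x = xhat
  have hxeq : x = xhat := by
    by_contra hne
    have h1 : flim x < flim xhat := huniq x hxIl hne
    have h2 : flim xhat ≤ sSup (flim '' Ilim) :=
      le_csSup ⟨flim b, by rintro _ ⟨z, hz, rfl⟩; exact hbmax hz⟩ ⟨xhat, hxhat, rfl⟩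
    rw [hfx] at h1
    linarith
  rw [← hxeq]
  exact hφtend

end
end
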